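/- Let c : Fin n → ℝ, suppose the set T of admissible triples is nonempty, and let e* ∈ T satisfy ∑_{j} c j · (x_{e*})_j ≤ ∑_{j} c j · (x_e)_j for every e ∈ T. Then x_{e*} ∈ S(A, b) and ∑_{j} c j · (x_{e*})_j ≤ ∑_{j} c j · x j for every x ∈ S(A, b); that is, x_{e*} is a global optimal solution of the problem of minimizing cᵀx over S(A, b). -/

import Mathlib

open Finset

variable {n : ℕ}

/-- max_{j} min{A i j, x i, x j} -/
noncomputable def maxmin (hn : 0 < n) (A : Fin n → Fin n → ℝ) (x : Fin n → ℝ) (i : Fin n) : ℝ :=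
  Finset.univ.sup' (Finset.univ_nonempty_iff.mpr (Fin.pos_iff_nonempty.mp hn))
    (fun j => min (A i j) (min (x i) (x j)))

def inBox (x : Fin n → ℝ) : Prop := ∀ j, x j ∈ Set.Icc (0:ℝ) 1

/-- S(aᵢ, bᵢ) -/
noncomputable def SeqSet (hn : 0 < n) (A : Fin n → Fin n → ℝ) (b : Fin n → ℝ) (i : Fin n) :
    Set (Fin n → ℝ) :=
  {x | inBox x ∧ maxmin hn A x i = b i}

/-- S(A, b) -/
noncomputable def SallSet (hn : 0 < n) (A : Fin n → Fin n → ℝ) (b : Fin n → ℝ) :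
    Set (Fin n → ℝ) :=
  {x | inBox x ∧ ∀ i, maxmin hn A x i = b i}

/-- X̄(i) = X̄(i,1) -/
noncomputable def Xbar1 (b : Fin n → ℝ) (i : Fin n) : Fin n → ℝ :=
  fun j => if j = i then b i else 1

/-- X̲(i) -/
noncomputable def Xund0 (b : Fin n → ℝ) (i : Fin n) : Fin n → ℝ :=
  fun j => if j = i then b i else 0

/-- X̄(i,2) -/
noncomputable def Xbar2 (A : Fin n → Fin n → ℝ) (b : Fin n → ℝ) (i : Fin n) : Fin n → ℝ :=
  fun j => if A i j > b i then b i else 1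

/-- X̲(i,j) -/
noncomputable def XundJ (b : Fin n → ℝ) (i j : Fin n) : Fin n → ℝ :=
  fun k => if k = i ∨ k = j then b i else 0

noncomputable def I1set (A : Fin n → Fin n → ℝ) (b : Fin n → ℝ) : Finset (Fin n) :=
  Finset.univ.filter (fun i => A i i > b i)

noncomputable def I2set (A : Fin n → Fin n → ℝ) (b : Fin n → ℝ) : Finset (Fin n) :=
  Finset.univ.filter (fun i => A i i = b i)

noncomputable def I3set (A : Fin n → Fin n → ℝ) (b : Fin n → ℝ) : Finset (Fin n) :=
  Finset.univ.filter (fun i => A i i < b i)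

/-- componentwise max over an index set, zero vector when empty -/
noncomputable def vsup (s : Finset (Fin n)) (f : Fin n → Fin n → ℝ) : Fin n → ℝ :=
  fun j => if h : s.Nonempty then s.sup' h (fun i => f i j) else 0

/-- componentwise min over an index set, all-ones vector when empty -/
noncomputable def vinf (s : Finset (Fin n)) (f : Fin n → Fin n → ℝ) : Fin n → ℝ :=
  fun j => if h : s.Nonempty then s.inf' h (fun i => f i j) else 1

noncomputable def X1lo (A : Fin n → Fin n → ℝ) (b : Fin n → ℝ) : Fin n → ℝ :=
  vsup (I1set A b) (Xund0 b)

noncomputable def X1hi (A : Fin n → Fin n → ℝ) (b : Fin n → ℝ) : Fin n → ℝ :=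
  vinf (I1set A b) (Xbar1 b)

noncomputable def X2lo (A : Fin n → Fin n → ℝ) (b : Fin n → ℝ) : Fin n → ℝ :=
  vsup (I2set A b) (Xund0 b)

/-- X̄(i,t) for t ∈ {1,2} -/
noncomputable def Xsel (A : Fin n → Fin n → ℝ) (b : Fin n → ℝ) (t : ℕ) (i : Fin n) : Fin n → ℝ :=
  if t = 1 then Xbar1 b i else Xbar2 A b i

noncomputable def X2hi (A : Fin n → Fin n → ℝ) (b : Fin n → ℝ) (e' : Fin n → ℕ) : Fin n → ℝ :=
  vinf (I2set A b) (fun i => Xsel A b (e' i) i)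

noncomputable def X3lo (A : Fin n → Fin n → ℝ) (b : Fin n → ℝ) (el : Fin n → Fin n) : Fin n → ℝ :=
  vsup (I3set A b) (fun i => XundJ b i (el i))

noncomputable def X3hi (A : Fin n → Fin n → ℝ) (b : Fin n → ℝ) (e'' : Fin n → ℕ) : Fin n → ℝ :=
  vinf (I3set A b) (fun i => Xsel A b (e'' i) i)

/-- membership of e̲ in E̲ : e̲(i) ∈ J_i for all i ∈ I₃ -/
def memEund (A : Fin n → Fin n → ℝ) (b : Fin n → ℝ) (el : Fin n → Fin n) : Prop :=
  ∀ i, A i i < b i → b i ≤ A i (el i)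

/-- membership of e' in E' -/
def memE' (A : Fin n → Fin n → ℝ) (b : Fin n → ℝ) (e' : Fin n → ℕ) : Prop :=
  ∀ i, A i i = b i → e' i = 1 ∨ e' i = 2

/-- membership of e'' in E'' -/
def memE'' (A : Fin n → Fin n → ℝ) (b : Fin n → ℝ) (e'' : Fin n → ℕ) : Prop :=
  ∀ i, A i i < b i → e'' i = 1 ∨ e'' i = 2

noncomputable def lowVec (A : Fin n → Fin n → ℝ) (b : Fin n → ℝ) (el : Fin n → Fin n) :
    Fin n → ℝ :=
  fun j => max (X1lo A b j) (max (X2lo A b j) (X3lo A b el j))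

noncomputable def hiVec (A : Fin n → Fin n → ℝ) (b : Fin n → ℝ) (e' e'' : Fin n → ℕ) :
    Fin n → ℝ :=
  fun j => min (X1hi A b j) (min (X2hi A b e' j) (X3hi A b e'' j))

/-- admissibility of a triple -/
noncomputable def Admissible (A : Fin n → Fin n → ℝ) (b : Fin n → ℝ)
    (el : Fin n → Fin n) (e' e'' : Fin n → ℕ) : Prop :=
  ∀ j, lowVec A b el j ≤ hiVec A b e' e'' j

/-- membership in T -/
noncomputable def memT (A : Fin n → Fin n → ℝ) (b : Fin n → ℝ)
    (el : Fin n → Fin n) (e' e'' : Fin n → ℕ) : Prop :=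
  memEund A b el ∧ memE' A b e' ∧ memE'' A b e'' ∧ Admissible A b el e' e''

noncomputable def xe (A : Fin n → Fin n → ℝ) (b : Fin n → ℝ) (c : Fin n → ℝ)
    (el : Fin n → Fin n) (e' e'' : Fin n → ℕ) : Fin n → ℝ :=
  fun j => if 0 ≤ c j then lowVec A b el j else hiVec A b e' e'' j

/-! Equation `i` holds exactly when some `j` lifts `min (A i j) (x i) (x j)` up to `b i`, and no
`j` with `A i j > b i` has both `x i` and `x j` strictly above `b i`. The first condition says that
`x` lies above one of the lower vectors `lowVec A b e̲`, the second that it lies below one of the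
upper vectors `hiVec A b e' e''`, so `S(A, b)` is the union of the boxes `[lowVec, hiVec]` over the
admissible triples. On each box the linear objective is minimised by `xe`, which takes the lower end
where `c j ≥ 0` and the upper end where `c j < 0`; minimising over the boxes therefore minimises
over `S(A, b)`. -/

section VectorBounds

variable {s : Finset (Fin n)} {f : Fin n → Fin n → ℝ} {x : Fin n → ℝ} {b : Fin n → ℝ} {i : Fin n}

lemma le_vsup (hi : i ∈ s) : f i ≤ vsup s f := fun j => by
  have hs : s.Nonempty := ⟨i, hi⟩
  simpa only [vsup, dif_pos hs] using Finset.le_sup' (fun i => f i j) hi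

lemma vinf_le (hi : i ∈ s) : vinf s f ≤ f i := fun j => by
  have hs : s.Nonempty := ⟨i, hi⟩
  simpa only [vinf, dif_pos hs] using Finset.inf'_le (fun i => f i j) hi

lemma vsup_le (hx : 0 ≤ x) (h : ∀ i ∈ s, f i ≤ x) : vsup s f ≤ x := fun j => by
  unfold vsup
  split_ifs with hs
  · exact Finset.sup'_le hs _ fun i hi => h i hi j
  · exact hx j

lemma le_vinf (hx : x ≤ 1) (h : ∀ i ∈ s, x ≤ f i) : x ≤ vinf s f := fun j => by
  unfold vinf
  split_ifs with hs
  · exact Finset.le_inf' hs _ fun i hi => h i hi j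
  · exact hx j

lemma vsup_nonneg (h : ∀ i ∈ s, 0 ≤ f i) : 0 ≤ vsup s f := by
  by_cases hs : s.Nonempty
  · obtain ⟨i, hi⟩ := hs
    exact (h i hi).trans (le_vsup hi)
  · intro j
    simp [vsup, hs]

lemma vinf_le_one (h : ∀ i ∈ s, f i ≤ 1) : vinf s f ≤ 1 := by
  by_cases hs : s.Nonempty
  · obtain ⟨i, hi⟩ := hs
    exact (vinf_le hi).trans (h i hi)
  · intro j
    simp [vinf, hs]

lemma Xund0_nonneg (hb : 0 ≤ b i) : 0 ≤ Xund0 b i := fun j => by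
  unfold Xund0
  split_ifs <;> simp [hb]

lemma Xbar1_le_one (hb : b i ≤ 1) : Xbar1 b i ≤ 1 := fun j => by
  unfold Xbar1
  split_ifs <;> simp [hb]

lemma Xund0_le (hx : 0 ≤ x) (hi : b i ≤ x i) : Xund0 b i ≤ x := fun k => by
  unfold Xund0
  split_ifs with hk
  · exact hk ▸ hi
  · exact hx k

lemma XundJ_le {j : Fin n} (hx : 0 ≤ x) (hi : b i ≤ x i) (hj : b i ≤ x j) : XundJ b i j ≤ x :=
  fun k => by
    unfold XundJ
    split_ifs with hk
    · rcases hk with rfl | rfl <;> assumption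
    · exact hx k

lemma le_Xbar1 (hx : x ≤ 1) (hi : x i ≤ b i) : x ≤ Xbar1 b i := fun k => by
  unfold Xbar1
  split_ifs with hk
  · exact hk ▸ hi
  · exact hx k

lemma le_Xbar2 {A : Fin n → Fin n → ℝ} (hx : x ≤ 1) (h : ∀ j, b i < A i j → x j ≤ b i) :
    x ≤ Xbar2 A b i := fun k => by
  unfold Xbar2
  split_ifs with hk
  · exact h k hk
  · exact hx k

end VectorBounds

section Boxes

variable {A : Fin n → Fin n → ℝ} {b x : Fin n → ℝ} {el : Fin n → Fin n} {e' e'' : Fin n → ℕ}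

lemma lowVec_nonneg (hb : ∀ i, 0 ≤ b i) : 0 ≤ lowVec A b el := fun j =>
  (vsup_nonneg (fun i _ => Xund0_nonneg (hb i)) j).trans (le_max_left _ _)

lemma hiVec_le_one (hb : ∀ i, b i ≤ 1) : hiVec A b e' e'' ≤ 1 := fun j =>
  (min_le_left _ _).trans (vinf_le_one (fun i _ => Xbar1_le_one (hb i)) j)

lemma maxmin_eq_iff (hn : 0 < n) (i : Fin n) :
    maxmin hn A x i = b i ↔
      (∃ j, b i ≤ A i j ∧ b i ≤ x i ∧ b i ≤ x j) ∧
        ∀ j, b i < A i j → min (x i) (x j) ≤ b i := by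
  rw [eq_comm, le_antisymm_iff, maxmin, Finset.le_sup'_iff, Finset.sup'_le_iff]
  simp only [Finset.mem_univ, true_and, true_implies, le_min_iff, min_le_iff,
    or_iff_not_imp_left (a := A i _ ≤ b i), not_le]

lemma min_le_of_le_Xsel {t : ℕ} {i j : Fin n} (ht : t = 1 ∨ t = 2) (hx : x ≤ Xsel A b t i)
    (hij : b i < A i j) : min (x i) (x j) ≤ b i := by
  rcases ht with rfl | rfl
  · refine (min_le_left _ _).trans ?_
    simpa [Xsel, Xbar1] using hx i
  · refine (min_le_right _ _).trans ?_
    simpa [Xsel, Xbar2, hij] using hx j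

lemma le_Xsel {i : Fin n} (hx : x ≤ 1) (h : ∀ j, b i < A i j → min (x i) (x j) ≤ b i) :
    x ≤ Xsel A b (if x i ≤ b i then 1 else 2) i := by
  split_ifs with hi
  · simpa [Xsel] using le_Xbar1 hx hi
  · simp only [Xsel, OfNat.ofNat_ne_one, if_false]
    exact le_Xbar2 hx fun j hij => (min_le_iff.mp (h j hij)).resolve_left hi

lemma exists_le_of_lowVec_le (hel : memEund A b el) (hx : lowVec A b el ≤ x) (i : Fin n) :
    ∃ j, b i ≤ A i j ∧ b i ≤ x i ∧ b i ≤ x j := by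
  have hX1 : X1lo A b ≤ x := fun j => (le_max_left _ _).trans (hx j)
  have hX2 : X2lo A b ≤ x := fun j => ((le_max_left _ _).trans (le_max_right _ _)).trans (hx j)
  have hX3 : X3lo A b el ≤ x := fun j => ((le_max_right _ _).trans (le_max_right _ _)).trans (hx j)
  rcases lt_trichotomy (A i i) (b i) with h | h | h
  · have hi : XundJ b i (el i) ≤ x :=
      (le_vsup (f := fun i => XundJ b i (el i)) (by simp [I3set, h])).trans hX3
    exact ⟨el i, hel i h, by simpa [XundJ] using hi i, by simpa [XundJ] using hi (el i)⟩
  · have hi : Xund0 b i ≤ x := (le_vsup (by simp [I2set, h])).trans hX2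
    exact ⟨i, h.ge, by simpa [Xund0] using hi i, by simpa [Xund0] using hi i⟩
  · have hi : Xund0 b i ≤ x := (le_vsup (by simp [I1set, h])).trans hX1
    exact ⟨i, h.le, by simpa [Xund0] using hi i, by simpa [Xund0] using hi i⟩

lemma min_le_of_le_hiVec (he' : memE' A b e') (he'' : memE'' A b e'')
    (hx : x ≤ hiVec A b e' e'') {i j : Fin n} (hij : b i < A i j) : min (x i) (x j) ≤ b i := by
  rcases lt_trichotomy (A i i) (b i) with h | h | h
  · have hle : x ≤ X3hi A b e'' := fun k =>
      (hx k).trans ((min_le_right _ _).trans (min_le_right _ _))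
    exact min_le_of_le_Xsel (he'' i h) (hle.trans (vinf_le (by simp [I3set, h]))) hij
  · have hle : x ≤ X2hi A b e' := fun k =>
      (hx k).trans ((min_le_right _ _).trans (min_le_left _ _))
    exact min_le_of_le_Xsel (he' i h) (hle.trans (vinf_le (by simp [I2set, h]))) hij
  · have hle : x ≤ Xbar1 b i := fun k =>
      (hx k).trans ((min_le_left _ _).trans (vinf_le (by simp [I1set, h]) k))
    exact (min_le_left _ _).trans (by simpa [Xbar1] using hle i)

lemma exists_lowVec_le (hx : 0 ≤ x) (h : ∀ i, ∃ j, b i ≤ A i j ∧ b i ≤ x i ∧ b i ≤ x j) :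
    ∃ el, memEund A b el ∧ lowVec A b el ≤ x := by
  choose el hel using h
  have hund0 : ∀ i, Xund0 b i ≤ x := fun i => Xund0_le hx (hel i).2.1
  refine ⟨el, fun i _ => (hel i).1, fun j => max_le ?_ (max_le ?_ ?_)⟩
  · exact vsup_le hx (fun i _ => hund0 i) j
  · exact vsup_le hx (fun i _ => hund0 i) j
  · exact vsup_le hx (fun i _ => XundJ_le hx (hel i).2.1 (hel i).2.2) j

lemma exists_le_hiVec (hx : x ≤ 1) (h : ∀ i j, b i < A i j → min (x i) (x j) ≤ b i) :
    ∃ e : Fin n → ℕ, (∀ i, e i = 1 ∨ e i = 2) ∧ x ≤ hiVec A b e e := by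
  refine ⟨fun i => if x i ≤ b i then 1 else 2, fun i => by dsimp only; split_ifs <;> simp,
    fun j => ?_⟩
  have hsel : ∀ i, x ≤ Xsel A b (if x i ≤ b i then 1 else 2) i := fun i => le_Xsel hx (h i)
  refine le_min (le_vinf hx (fun i hi => le_Xbar1 hx ?_) j)
    (le_min (le_vinf hx (fun i _ => hsel i) j) (le_vinf hx (fun i _ => hsel i) j))
  have hi : b i < A i i := by simpa [I1set] using hi
  simpa using h i i hi

theorem mem_SallSet_of_lowVec_le_of_le_hiVec (hn : 0 < n) (hb : ∀ i, b i ∈ Set.Icc (0 : ℝ) 1)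
    (hel : memEund A b el) (he' : memE' A b e') (he'' : memE'' A b e'')
    (hlo : lowVec A b el ≤ x) (hhi : x ≤ hiVec A b e' e'') : x ∈ SallSet hn A b :=
  ⟨fun j => ⟨(lowVec_nonneg (fun i => (hb i).1) j).trans (hlo j),
      (hhi j).trans (hiVec_le_one (fun i => (hb i).2) j)⟩,
    fun i => (maxmin_eq_iff hn i).mpr
      ⟨exists_le_of_lowVec_le hel hlo i, fun _ hij => min_le_of_le_hiVec he' he'' hhi hij⟩⟩

theorem exists_memT_of_mem_SallSet (hn : 0 < n) (hx : x ∈ SallSet hn A b) :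
    ∃ el e' e'', memT A b el e' e'' ∧ lowVec A b el ≤ x ∧ x ≤ hiVec A b e' e'' := by
  obtain ⟨hbox, heq⟩ := hx
  have hlower := fun i => ((maxmin_eq_iff hn i).mp (heq i)).1
  have hupper := fun i => ((maxmin_eq_iff hn i).mp (heq i)).2
  obtain ⟨el, hel, hlo⟩ := exists_lowVec_le (fun j => (hbox j).1) hlower
  obtain ⟨e, he, hhi⟩ := exists_le_hiVec (fun j => (hbox j).2) hupper
  exact ⟨el, e, e, ⟨hel, fun i _ => he i, fun i _ => he i, hlo.trans hhi⟩, hlo, hhi⟩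

end Boxes

section Objective

variable {A : Fin n → Fin n → ℝ} {b c x : Fin n → ℝ} {el : Fin n → Fin n} {e' e'' : Fin n → ℕ}

lemma lowVec_le_xe (hadm : Admissible A b el e' e'') : lowVec A b el ≤ xe A b c el e' e'' :=
  fun j => by
    unfold xe
    split_ifs
    exacts [le_rfl, hadm j]

lemma xe_le_hiVec (hadm : Admissible A b el e' e'') : xe A b c el e' e'' ≤ hiVec A b e' e'' :=
  fun j => by
    unfold xe
    split_ifs
    exacts [hadm j, le_rfl]

lemma sum_mul_xe_le (hlo : lowVec A b el ≤ x) (hhi : x ≤ hiVec A b e' e'') :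
    ∑ j, c j * xe A b c el e' e'' j ≤ ∑ j, c j * x j := by
  refine Finset.sum_le_sum fun j _ => ?_
  unfold xe
  split_ifs with hc
  · exact mul_le_mul_of_nonneg_left (hlo j) hc
  · exact mul_le_mul_of_nonpos_left (hhi j) (not_le.mp hc).le

end Objective

theorem stmt17_general (n : ℕ) (hn : 0 < n) (A : Fin n → Fin n → ℝ) (b : Fin n → ℝ)
    (hb : ∀ i, b i ∈ Set.Icc (0:ℝ) 1)
    (c : Fin n → ℝ) (elₒ : Fin n → Fin n) (e'ₒ e''ₒ : Fin n → ℕ)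
    (hstar : memT A b elₒ e'ₒ e''ₒ)
    (hopt : ∀ el e' e'', memT A b el e' e'' →
      ∑ j, c j * xe A b c elₒ e'ₒ e''ₒ j ≤ ∑ j, c j * xe A b c el e' e'' j) :
    xe A b c elₒ e'ₒ e''ₒ ∈ SallSet hn A b ∧
      ∀ x ∈ SallSet hn A b,
        ∑ j, c j * xe A b c elₒ e'ₒ e''ₒ j ≤ ∑ j, c j * x j := by
  obtain ⟨hel, he', he'', hadm⟩ := hstar
  refine ⟨mem_SallSet_of_lowVec_le_of_le_hiVec hn hb hel he' he''
    (lowVec_le_xe hadm) (xe_le_hiVec hadm), fun x hx => ?_⟩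
  obtain ⟨el, e', e'', hT, hlo, hhi⟩ := exists_memT_of_mem_SallSet hn hx
  exact (hopt el e' e'' hT).trans (sum_mul_xe_le hlo hhi)

theorem stmt17 (n : ℕ) (hn : 0 < n) (A : Fin n → Fin n → ℝ) (b : Fin n → ℝ)
    (hA : ∀ i j, A i j ∈ Set.Icc (0:ℝ) 1) (hb : ∀ i, b i ∈ Set.Icc (0:ℝ) 1)
    (c : Fin n → ℝ) (elₒ : Fin n → Fin n) (e'ₒ e''ₒ : Fin n → ℕ)
    (hstar : memT A b elₒ e'ₒ e''ₒ)
    (hopt : ∀ el e' e'', memT A b el e' e'' →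
      ∑ j, c j * xe A b c elₒ e'ₒ e''ₒ j ≤ ∑ j, c j * xe A b c el e' e'' j) :
    xe A b c elₒ e'ₒ e''ₒ ∈ SallSet hn A b ∧
      ∀ x ∈ SallSet hn A b,
        ∑ j, c j * xe A b c elₒ e'ₒ e''ₒ j ≤ ∑ j, c j * x j :=
  stmt17_general n hn A b hb c elₒ e'ₒ e''ₒ hstar hopt
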